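/- The function χ(ρ) = (1/(1+ρ²))·(1/ρ² + 6ρ·log((1-ρ)/(1+ρ)) + 9) satisfies the equation u'' + (2/ρ - 2ρ/(1-ρ²))u' - (2cos(2f₀)/(ρ²(1-ρ²)) + 2/(1-ρ²))u = 0 for all ρ ∈ (0,1), where f₀(ρ) = 2·arctan(ρ). -/

import Mathlib

/-!
Write `χ = N / (1 + ρ²)` with `N = ρ⁻² + 6ρL + 9` and `L = log ((1 - ρ) / (1 + ρ))`. Since
`L' = -2 / (1 - ρ²)`, the derivatives `N'` and `N''` are affine in `L` with rational coefficients,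
and `cos (2 f₀) = (1 - 6ρ² + ρ⁴) / (1 + ρ²)²` is rational, so the equation becomes a rational
identity in `ρ` and `L`, verified by clearing denominators. (The coefficient `6ρ / (1 + ρ²)` of `L`
is itself a solution, a multiple of the symmetry mode `ρ f₀'(ρ)`; `χ` is the second solution
obtained from it by reduction of order.)
-/

noncomputable def f₀ : ℝ → ℝ := fun ρ => 2 * Real.arctan ρ

noncomputable def χ : ℝ → ℝ :=
  fun ρ => (1 / (1 + ρ^2)) * (1 / ρ^2 + 6 * ρ * Real.log ((1 - ρ) / (1 + ρ)) + 9)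

open Real Filter Topology

theorem deriv_deriv_mul {𝕜 : Type*} [NontriviallyNormedField 𝕜] {f g f' g' : 𝕜 → 𝕜}
    {f'' g'' x : 𝕜} (hf : ∀ᶠ y in 𝓝 x, HasDerivAt f (f' y) y) (hf' : HasDerivAt f' f'' x)
    (hg : ∀ᶠ y in 𝓝 x, HasDerivAt g (g' y) y) (hg' : HasDerivAt g' g'' x) :
    deriv (deriv (f * g)) x = f'' * g x + 2 * (f' x * g' x) + f x * g'' := by
  have hfg : deriv (f * g) =ᶠ[𝓝 x] f' * g + f * g' := by
    filter_upwards [hf, hg] with y hfy hgy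
    exact (hfy.mul hgy).deriv
  rw [hfg.deriv_eq, ((hf'.mul hg.self_of_nhds).add (hf.self_of_nhds.mul hg')).deriv]
  ring

theorem hasDerivAt_log_one_sub_div_one_add {x : ℝ} (hx : 1 - x ^ 2 ≠ 0) :
    HasDerivAt (fun y => log ((1 - y) / (1 + y))) (-2 / (1 - x ^ 2)) x := by
  have h₁ : 1 - x ≠ 0 := fun h => hx (by linear_combination (1 + x) * h)
  have h₂ : 1 + x ≠ 0 := fun h => hx (by linear_combination (1 - x) * h)
  refine ((((hasDerivAt_id x).const_sub 1).div ((hasDerivAt_id x).const_add 1) h₂).log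
    (div_ne_zero h₁ h₂)).congr_deriv ?_
  simp only [id, Pi.div_apply]
  field_simp
  ring

theorem hasDerivAt_one_div_one_add_sq (x : ℝ) :
    HasDerivAt (fun y => 1 / (1 + y ^ 2)) (-2 * x / (1 + x ^ 2) ^ 2) x := by
  refine ((hasDerivAt_const x (1:ℝ)).div ((hasDerivAt_pow 2 x).const_add 1)
    (by positivity)).congr_deriv ?_
  ring

theorem hasDerivAt_neg_two_mul_div_one_add_sq_sq (x : ℝ) :
    HasDerivAt (fun y => -2 * y / (1 + y ^ 2) ^ 2) ((6 * x ^ 2 - 2) / (1 + x ^ 2) ^ 3) x := by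
  have h : 1 + x ^ 2 ≠ 0 := by positivity
  refine (((hasDerivAt_id x).const_mul (-2)).div (((hasDerivAt_pow 2 x).const_add 1).pow 2)
    (pow_ne_zero 2 h)).congr_deriv ?_
  simp only [id, Pi.pow_apply]
  field_simp
  ring

theorem hasDerivAt_chi_num {x : ℝ} (hx₀ : x ≠ 0) (hx : 1 - x ^ 2 ≠ 0) :
    HasDerivAt (fun y => 1 / y ^ 2 + 6 * y * log ((1 - y) / (1 + y)) + 9)
      (-2 / x ^ 3 + 6 * log ((1 - x) / (1 + x)) - 12 * x / (1 - x ^ 2)) x := by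
  refine ((((hasDerivAt_const x (1:ℝ)).div (hasDerivAt_pow 2 x) (pow_ne_zero 2 hx₀)).add
    (((hasDerivAt_id x).const_mul 6).mul (hasDerivAt_log_one_sub_div_one_add hx))).add_const
    9).congr_deriv ?_
  simp only [id]
  field_simp
  ring

theorem hasDerivAt_chi_num_deriv {x : ℝ} (hx₀ : x ≠ 0) (hx : 1 - x ^ 2 ≠ 0) :
    HasDerivAt (fun y => -2 / y ^ 3 + 6 * log ((1 - y) / (1 + y)) - 12 * y / (1 - y ^ 2))
      (6 / x ^ 4 - 12 / (1 - x ^ 2) - 12 * (1 + x ^ 2) / (1 - x ^ 2) ^ 2) x := by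
  refine ((((hasDerivAt_const x (-2:ℝ)).div (hasDerivAt_pow 3 x) (pow_ne_zero 3 hx₀)).add
    ((hasDerivAt_log_one_sub_div_one_add hx).const_mul 6)).sub
    (((hasDerivAt_id x).const_mul 12).div ((hasDerivAt_pow 2 x).const_sub 1) hx)).congr_deriv ?_
  simp only [id]
  field_simp
  ring

theorem cos_two_mul_f₀ (ρ : ℝ) : cos (2 * f₀ ρ) = (1 - 6 * ρ ^ 2 + ρ ^ 4) / (1 + ρ ^ 2) ^ 2 := by
  have h : 0 < 1 + ρ ^ 2 := by positivity
  rw [f₀, cos_two_mul, cos_two_mul, cos_arctan, div_pow, one_pow, sq_sqrt h.le]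
  field_simp
  ring

theorem chi_solves_lambda_one_eq (ρ : ℝ) (hρ : ρ ∈ Set.Ioo (0:ℝ) 1) :
    deriv (deriv χ) ρ + (2 / ρ - 2 * ρ / (1 - ρ^2)) * deriv χ ρ
      - (2 * Real.cos (2 * f₀ ρ) / (ρ^2 * (1 - ρ^2)) + 2 / (1 - ρ^2)) * χ ρ = 0 := by
  have hregular : ∀ᶠ y in 𝓝 ρ, y ≠ 0 ∧ 1 - y ^ 2 ≠ 0 := by
    filter_upwards [isOpen_Ioo.mem_nhds hρ] with y ⟨hy₀, hy₁⟩
    exact ⟨hy₀.ne', by nlinarith⟩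
  obtain ⟨hρ₀, hρ₁⟩ := hregular.self_of_nhds
  have hχ : χ = (fun y => 1 / (1 + y ^ 2)) *
      fun y => 1 / y ^ 2 + 6 * y * log ((1 - y) / (1 + y)) + 9 := rfl
  have hχ' := ((hasDerivAt_one_div_one_add_sq ρ).mul (hasDerivAt_chi_num hρ₀ hρ₁)).deriv
  have hχ'' := deriv_deriv_mul (.of_forall hasDerivAt_one_div_one_add_sq)
    (hasDerivAt_neg_two_mul_div_one_add_sq_sq ρ)
    (hregular.mono fun y hy => hasDerivAt_chi_num hy.1 hy.2) (hasDerivAt_chi_num_deriv hρ₀ hρ₁)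
  rw [hχ, hχ'', hχ', Pi.mul_apply, cos_two_mul_f₀]
  field_simp
  ring
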